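/- arXiv:2411.12996 — 6 statements merged into one kernel-verified Lean document; each statement's English description precedes it below -/
import Mathlib

section
/- Let (E, ρ) be a metric space and μ a Borel probability measure on E such that μ(B(x,r)) ≤ ψ(r) for all x ∈ E and r ≥ 0, where ψ : [0,∞) → [0,∞) is increasing and B(x,r) := {y ∈ E : ρ(x,y) < r}. Let N ≥ 1 and let ν be a probability measure on E whose support is a finite set of N points. Then for every p ∈ [1,∞), every coupling π of ν and μ, and every r ≥ 0 satisfying ψ(r) ≤ 1/(2N), one has ∫_{E×E} ρ(x,y)^p π(dx,dy) ≥ r^p / 2. -/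
/-!
Let `U` be the union of the balls of radius `r` around the `N` atoms of `ν`. By the ball bound,
`μ U ≤ N ψ(r) ≤ 1/2`. Under the coupling `π`, the first coordinate lies in the support `D` of `ν`
almost surely, so `π (D × Uᶜ) ≥ 1 - μ U ≥ 1/2`; on `D × Uᶜ` the two coordinates are at distance
at least `r`, whence the cost is at least `r ^ p / 2`.
-/

open MeasureTheory Metric Set

lemma measure_biUnion_ball_le_inv_two {E : Type*} [PseudoMetricSpace E] [MeasurableSpace E]
    (μ : Measure E) (D : Finset E) {r c : ℝ} (hball : ∀ x, μ (ball x r) ≤ ENNReal.ofReal c)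
    (hc : c ≤ 1 / (2 * D.card)) :
    μ (⋃ x ∈ D, ball x r) ≤ 2⁻¹ := by
  have hcard : (D.card : ℝ) * (1 / (2 * D.card)) ≤ 2⁻¹ := by
    rcases eq_or_ne (D.card : ℝ) 0 with h | h
    · simp [h]
    · rw [mul_one_div, div_mul_cancel_right₀ h]
  calc μ (⋃ x ∈ D, ball x r)
      ≤ ∑ x ∈ D, μ (ball x r) := measure_biUnion_finset_le D _
    _ ≤ ∑ _x ∈ D, ENNReal.ofReal c := Finset.sum_le_sum fun x _ => hball x
    _ = ENNReal.ofReal (D.card * c) := by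
      rw [Finset.sum_const, nsmul_eq_mul, ENNReal.ofReal_mul (Nat.cast_nonneg _),
        ENNReal.ofReal_natCast]
    _ ≤ ENNReal.ofReal 2⁻¹ := ENNReal.ofReal_le_ofReal <|
      (mul_le_mul_of_nonneg_left hc (Nat.cast_nonneg _)).trans hcard
    _ = 2⁻¹ := by rw [ENNReal.ofReal_inv_of_pos two_pos, ENNReal.ofReal_ofNat]

lemma measure_univ_le_prod_add_map_compl {α β : Type*} [MeasurableSpace α] [MeasurableSpace β]
    (π : Measure (α × β)) (s : Set α) (t : Set β) :
    π univ ≤ π (s ×ˢ t) + π.map Prod.fst sᶜ + π.map Prod.snd tᶜ := by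
  have hcover : univ ⊆ s ×ˢ t ∪ Prod.fst ⁻¹' sᶜ ∪ Prod.snd ⁻¹' tᶜ := by
    rintro ⟨a, b⟩ -
    by_cases a ∈ s <;> by_cases b ∈ t <;> simp_all
  calc π univ ≤ π (s ×ˢ t ∪ Prod.fst ⁻¹' sᶜ ∪ Prod.snd ⁻¹' tᶜ) := measure_mono hcover
    _ ≤ π (s ×ˢ t) + π (Prod.fst ⁻¹' sᶜ) + π (Prod.snd ⁻¹' tᶜ) :=
      (measure_union_le _ _).trans (add_le_add_left (measure_union_le _ _) _)
    _ ≤ π (s ×ˢ t) + π.map Prod.fst sᶜ + π.map Prod.snd tᶜ := by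
      gcongr
      · exact Measure.le_map_apply measurable_fst.aemeasurable _
      · exact Measure.le_map_apply measurable_snd.aemeasurable _

theorem stmt_0_general
    {E : Type*} [MetricSpace E] [MeasurableSpace E] [BorelSpace E]
    (μ ν : Measure E) [IsProbabilityMeasure μ] [IsProbabilityMeasure ν]
    (ψ : ℝ → ℝ)
    (hμψ : ∀ (x : E) (r : ℝ), 0 ≤ r → μ (ball x r) ≤ ENNReal.ofReal (ψ r))
    (N : ℕ)
    (D : Finset E) (hDcard : D.card = N) (hνD : ν ((↑D : Set E)ᶜ) = 0)
    (p : ℝ) (hp : 1 ≤ p)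
    (π : Measure (E × E)) [IsProbabilityMeasure π]
    (hπ1 : π.map Prod.fst = ν) (hπ2 : π.map Prod.snd = μ)
    (r : ℝ) (hr : 0 ≤ r) (hrψ : ψ r ≤ 1 / (2 * N)) :
    ENNReal.ofReal (r ^ p / 2) ≤ ∫⁻ z, ENNReal.ofReal (dist z.1 z.2 ^ p) ∂π := by
  set U := ⋃ x ∈ D, ball x r
  set S := (D : Set E) ×ˢ Uᶜ
  have hU : μ U ≤ 2⁻¹ :=
    measure_biUnion_ball_le_inv_two μ D (fun x => hμψ x r hr) (hDcard ▸ hrψ)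
  have hS : 2⁻¹ ≤ π S := by
    have h := measure_univ_le_prod_add_map_compl π D Uᶜ
    rw [measure_univ, hπ1, hπ2, hνD, add_zero, compl_compl] at h
    calc 2⁻¹ = 1 - (2⁻¹ : ENNReal) := ENNReal.one_sub_inv_two.symm
      _ ≤ π S := tsub_le_iff_right.2 (h.trans (add_le_add le_rfl hU))
  have hS_meas : MeasurableSet S :=
    D.finite_toSet.measurableSet.prod (isOpen_biUnion fun x _ => isOpen_ball).measurableSet.compl
  have hdist : ∀ z ∈ S, ENNReal.ofReal (r ^ p) ≤ ENNReal.ofReal (dist z.1 z.2 ^ p) := by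
    rintro ⟨x, y⟩ ⟨hx, hy⟩
    have : r ≤ dist x y := by
      simpa [U, dist_comm] using fun h => hy (mem_biUnion hx h)
    exact ENNReal.ofReal_le_ofReal (Real.rpow_le_rpow hr this (zero_le_one.trans hp))
  calc ENNReal.ofReal (r ^ p / 2) = ENNReal.ofReal (r ^ p) * 2⁻¹ := by
        rw [div_eq_mul_inv, ENNReal.ofReal_mul (by positivity), ENNReal.ofReal_inv_of_pos two_pos,
          ENNReal.ofReal_ofNat]
    _ ≤ ∫⁻ _ in S, ENNReal.ofReal (r ^ p) ∂π := by rw [setLIntegral_const]; gcongr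
    _ ≤ ∫⁻ z in S, ENNReal.ofReal (dist z.1 z.2 ^ p) ∂π := setLIntegral_mono' hS_meas hdist
    _ ≤ ∫⁻ z, ENNReal.ofReal (dist z.1 z.2 ^ p) ∂π := setLIntegral_le_lintegral _ _

/-- lower bound on the transport cost between a measure supported on `N`
points and a measure `μ` all of whose balls of radius `r` have mass at most `ψ r ≤ 1/(2N)`. -/
theorem stmt_0
    {E : Type*} [MetricSpace E] [MeasurableSpace E] [BorelSpace E]
    (μ ν : Measure E) [IsProbabilityMeasure μ] [IsProbabilityMeasure ν]
    (ψ : ℝ → ℝ) (hψ : MonotoneOn ψ (Ici (0 : ℝ)))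
    (hμψ : ∀ (x : E) (r : ℝ), 0 ≤ r → μ (ball x r) ≤ ENNReal.ofReal (ψ r))
    (N : ℕ) (hN : 1 ≤ N)
    (D : Finset E) (hDcard : D.card = N) (hνD : ν ((↑D : Set E)ᶜ) = 0)
    (p : ℝ) (hp : 1 ≤ p)
    (π : Measure (E × E)) [IsProbabilityMeasure π]
    (hπ1 : π.map Prod.fst = ν) (hπ2 : π.map Prod.snd = μ)
    (r : ℝ) (hr : 0 ≤ r) (hrψ : ψ r ≤ 1 / (2 * N)) :
    ENNReal.ofReal (r ^ p / 2) ≤ ∫⁻ z, ENNReal.ofReal (dist z.1 z.2 ^ p) ∂π :=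
  stmt_0_general μ ν ψ hμψ N D hDcard hνD p hp π hπ1 hπ2 r hr hrψ
end

section
/- Let p > 1 and define θ : [0,1] → [0,1] by θ(s) = 2^{p−1} s^p for s ∈ [0, 1/2] and θ(s) = 1 − 2^{p−1}(1−s)^p for s ∈ (1/2, 1]. Then θ is differentiable on (0,1) with θ'(s) = p 2^{p−1} (min{s, 1−s})^{p−1}, and min{θ(s), 1−θ(s)} = 2^{p−1} (min{s, 1−s})^p for all s ∈ [0,1]; consequently ∫₀¹ θ'(s)^p / (min{θ(s), 1−θ(s)})^{p−1} ds = p^p 2^{p−1}. -/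
/-!
On each half of `[0, 1]` the map `θ` is a power function of `m = min s (1 - s)`; the two branches
meet at `s = 1/2` with the common value `1/2` and the common slope, so `θ` is differentiable
there too. Since `θ' = p 2^(p-1) m^(p-1)` and `min θ (1 - θ) = 2^(p-1) m^p`, the integrand
`θ'^p / (min θ (1 - θ))^(p-1)` is the constant `p^p 2^(p-1)` on `(0, 1)`.
-/

open Real Set MeasureTheory

noncomputable def symmetricPowerReparam (p s : ℝ) : ℝ :=
  if s ≤ 1 / 2 then 2 ^ (p - 1) * s ^ p else 1 - 2 ^ (p - 1) * (1 - s) ^ p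

theorem hasDerivAt_const_mul_rpow (c p : ℝ) {x : ℝ} (hx : x ≠ 0) :
    HasDerivAt (fun s : ℝ => c * s ^ p) (p * c * x ^ (p - 1)) x :=
  ((hasDerivAt_rpow_const (Or.inl hx)).const_mul c).congr_deriv (by ring)

theorem hasDerivAt_one_sub_const_mul_one_sub_rpow (c p : ℝ) {x : ℝ} (hx : x ≠ 1) :
    HasDerivAt (fun s : ℝ => 1 - c * (1 - s) ^ p) (p * c * (1 - x) ^ (p - 1)) x := by
  have h := (hasDerivAt_const_mul_rpow c p (sub_ne_zero.2 hx.symm)).comp x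
    ((hasDerivAt_id x).const_sub 1)
  exact (h.const_sub 1).congr_deriv (by simp)

theorem hasDerivAt_of_eqOn_Iic_of_eqOn_Ici {E : Type*} [NormedAddCommGroup E] [NormedSpace ℝ E]
    {f g h : ℝ → E} {f' : E} {a : ℝ}
    (hfg : EqOn f g (Iic a)) (hfh : EqOn f h (Ici a))
    (hg : HasDerivAt g f' a) (hh : HasDerivAt h f' a) : HasDerivAt f f' a := by
  have hl := hg.hasDerivWithinAt.congr (fun y hy => hfg hy) (hfg (le_refl a))
  have hr := hh.hasDerivWithinAt.congr (fun y hy => hfh hy) (hfh (le_refl a))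
  simpa only [Iic_union_Ici, hasDerivWithinAt_univ] using hl.union hr

theorem two_rpow_sub_one_mul_half_rpow (p : ℝ) : (2 : ℝ) ^ (p - 1) * (1 / 2) ^ p = 1 / 2 := by
  have h2 : (2 : ℝ) ^ p ≠ 0 := by positivity
  rw [rpow_sub_one two_ne_zero, div_rpow zero_le_one zero_le_two, one_rpow]
  field_simp

theorem two_rpow_sub_one_mul_rpow_le_half {p t : ℝ} (hp : 0 ≤ p) (ht₀ : 0 ≤ t)
    (ht : t ≤ 1 / 2) : (2 : ℝ) ^ (p - 1) * t ^ p ≤ 1 / 2 :=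
  calc (2 : ℝ) ^ (p - 1) * t ^ p ≤ 2 ^ (p - 1) * (1 / 2) ^ p := by gcongr
    _ = 1 / 2 := two_rpow_sub_one_mul_half_rpow p

theorem mul_mul_rpow_sub_one_rpow_div {p c m : ℝ} (hp : 0 ≤ p) (hc : 0 < c) (hm : 0 < m) :
    (p * c * m ^ (p - 1)) ^ p / (c * m ^ p) ^ (p - 1) = p ^ p * c := by
  rw [mul_rpow (by positivity) (by positivity), mul_rpow hp hc.le,
    mul_rpow hc.le (by positivity), ← rpow_mul hm.le, ← rpow_mul hm.le, mul_comm (p - 1) p,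
    rpow_sub_one hc.ne']
  have : m ^ (p * (p - 1)) ≠ 0 := by positivity
  have : c ^ p ≠ 0 := by positivity
  field_simp

namespace symmetricPowerReparam

theorem hasDerivAt (p : ℝ) {s : ℝ} (hs : s ∈ Ioo 0 1) :
    HasDerivAt (symmetricPowerReparam p) (p * 2 ^ (p - 1) * (min s (1 - s)) ^ (p - 1)) s := by
  rcases lt_trichotomy s (1 / 2) with h | rfl | h
  · rw [min_eq_left (by linarith)]
    refine (hasDerivAt_const_mul_rpow _ p hs.1.ne').congr_of_eventuallyEq ?_
    filter_upwards [Iio_mem_nhds h] with y hy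
    exact if_pos hy.le
  · rw [show (1 : ℝ) - 1 / 2 = 1 / 2 by norm_num, min_self]
    have hR := hasDerivAt_one_sub_const_mul_one_sub_rpow (2 ^ (p - 1)) p
      (x := 1 / 2) (by norm_num)
    rw [show (1 : ℝ) - 1 / 2 = 1 / 2 by norm_num] at hR
    refine hasDerivAt_of_eqOn_Iic_of_eqOn_Ici (fun y hy => if_pos hy) (fun y hy => ?_)
      (hasDerivAt_const_mul_rpow _ p (by norm_num)) hR
    obtain rfl | hy := (mem_Ici.1 hy).eq_or_lt
    · rw [symmetricPowerReparam, if_pos le_rfl, show (1 : ℝ) - 1 / 2 = 1 / 2 by norm_num,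
        two_rpow_sub_one_mul_half_rpow]
      norm_num
    · exact if_neg (not_le.2 hy)
  · rw [min_eq_right (by linarith)]
    refine (hasDerivAt_one_sub_const_mul_one_sub_rpow _ p hs.2.ne).congr_of_eventuallyEq ?_
    filter_upwards [Ioi_mem_nhds h] with y hy
    exact if_neg (not_le.2 hy)

theorem min_one_sub {p s : ℝ} (hp : 0 ≤ p) (hs : s ∈ Icc 0 1) :
    min (symmetricPowerReparam p s) (1 - symmetricPowerReparam p s) =
      2 ^ (p - 1) * (min s (1 - s)) ^ p := by
  obtain ⟨hs₀, hs₁⟩ := hs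
  unfold symmetricPowerReparam
  split_ifs with h
  · have := two_rpow_sub_one_mul_rpow_le_half hp hs₀ h
    rw [min_eq_left (by linarith), min_eq_left (by linarith)]
  · have := two_rpow_sub_one_mul_rpow_le_half hp (by linarith) (by linarith : 1 - s ≤ 1 / 2)
    rw [min_eq_right (by linarith), sub_sub_cancel, min_eq_right (by linarith)]

theorem integral_deriv_rpow_div_min_rpow {p : ℝ} (hp : 0 ≤ p) :
    ∫ s in (0 : ℝ)..1, deriv (symmetricPowerReparam p) s ^ p /
        (min (symmetricPowerReparam p s) (1 - symmetricPowerReparam p s)) ^ (p - 1) =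
      p ^ p * 2 ^ (p - 1) := by
  rw [intervalIntegral.integral_of_le zero_le_one, integral_Ioc_eq_integral_Ioo,
    setIntegral_congr_fun measurableSet_Ioo (g := fun _ => p ^ p * 2 ^ (p - 1)) ?_]
  · simp
  intro s hs
  dsimp only
  rw [(hasDerivAt p hs).deriv, min_one_sub hp (Ioo_subset_Icc_self hs)]
  exact mul_mul_rpow_sub_one_rpow_div hp (by positivity) (lt_min hs.1 (sub_pos.2 hs.2))

end symmetricPowerReparam

/-- properties of the symmetric reparametrization
`θ(s) = 2^{p-1} s^p` on `[0,1/2]`, `θ(s) = 1 - 2^{p-1}(1-s)^p` on `(1/2,1]`. -/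
theorem stmt_2 (p : ℝ) (hp : 1 < p)
    (θ : ℝ → ℝ)
    (hθ : ∀ s : ℝ, θ s = if s ≤ 1 / 2 then 2 ^ (p - 1) * s ^ p
      else 1 - 2 ^ (p - 1) * (1 - s) ^ p) :
    (∀ s ∈ Set.Ioo (0 : ℝ) 1,
      HasDerivAt θ (p * 2 ^ (p - 1) * (min s (1 - s)) ^ (p - 1)) s) ∧
    (∀ s ∈ Set.Icc (0 : ℝ) 1,
      min (θ s) (1 - θ s) = 2 ^ (p - 1) * (min s (1 - s)) ^ p) ∧
    (∫ s in (0 : ℝ)..1, (deriv θ s) ^ p / (min (θ s) (1 - θ s)) ^ (p - 1))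
      = p ^ p * 2 ^ (p - 1) := by
  obtain rfl : θ = symmetricPowerReparam p := funext hθ
  have hp₀ : 0 ≤ p := by linarith
  exact ⟨fun s hs => symmetricPowerReparam.hasDerivAt p hs,
    fun s hs => symmetricPowerReparam.min_one_sub hp₀ hs,
    symmetricPowerReparam.integral_deriv_rpow_div_min_rpow hp₀⟩
end

section
/- Let θ > 0 and τ > 1/2. There exists a constant c₃ > 0 such that for every x ∈ ℝⁿ with |x| ≥ 1 and every r ∈ (0,1], (1 + θ(|x| − r/4)²)^τ ≤ (1 + θ|x|²)^τ − c₃ r |x|^{2τ−1}. -/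
open Real Set

/-!
Mean value theorem for `g t = (1 + θ t²)^τ` on `[|x| - r/4, |x|]`. On `[3|x|/4, |x|]` the base
`1 + θ t²` lies between `(9θ/16)|x|²` and `(1 + θ)|x|²`, so whatever the sign of `τ - 1`,
`g' t = 2τθ t (1 + θ t²)^(τ-1)` is at least a constant times `|x|^(2τ-1)`.
-/

lemma min_rpow_le_rpow_of_mem_Icc {m M u : ℝ} (q : ℝ) (hm : 0 < m) (hu : u ∈ Icc m M) :
    min (m ^ q) (M ^ q) ≤ u ^ q := by
  rcases le_total 0 q with hq | hq
  · exact (min_le_left _ _).trans (rpow_le_rpow hm.le hu.1 hq)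
  · exact (min_le_right _ _).trans (rpow_le_rpow_of_nonpos (hm.trans_le hu.1) hu.2 hq)

section

variable {θ τ : ℝ}

lemma hasDerivAt_one_add_mul_sq_rpow (hθ : 0 ≤ θ) (t : ℝ) :
    HasDerivAt (fun t ↦ (1 + θ * t ^ 2) ^ τ)
      (τ * (1 + θ * t ^ 2) ^ (τ - 1) * (2 * θ * t)) t := by
  have hbase : 1 + θ * t ^ 2 ≠ 0 := by positivity
  convert (((hasDerivAt_pow 2 t).const_mul θ).const_add 1).rpow_const (Or.inl hbase) using 1
  push_cast
  ring

lemma min_rpow_mul_rpow_le_rpow_one_add_mul_sq (hθ : 0 < θ) {s t : ℝ} (hs : 1 ≤ s)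
    (ht : t ∈ Icc (3 / 4 * s) s) :
    min ((9 / 16 * θ) ^ (τ - 1)) ((1 + θ) ^ (τ - 1)) * s ^ (2 * (τ - 1))
      ≤ (1 + θ * t ^ 2) ^ (τ - 1) := by
  have hs0 : 0 < s := one_pos.trans_le hs
  have hs2 : 0 < s ^ 2 := by positivity
  obtain ⟨ht₁, ht₂⟩ := ht
  have hsq₁ : (3 / 4 * s) ^ 2 ≤ t ^ 2 := pow_le_pow_left₀ (by positivity) ht₁ 2
  have hsq₂ : t ^ 2 ≤ s ^ 2 := pow_le_pow_left₀ (by linarith) ht₂ 2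
  set u := (1 + θ * t ^ 2) / s ^ 2
  have hu : u ∈ Icc (9 / 16 * θ) (1 + θ) := by
    constructor
    · rw [le_div_iff₀ hs2]; nlinarith
    · rw [div_le_iff₀ hs2]; nlinarith
  have hsplit : (1 + θ * t ^ 2) ^ (τ - 1) = u ^ (τ - 1) * s ^ (2 * (τ - 1)) := by
    rw [rpow_mul hs0.le, rpow_two, ← mul_rpow (by positivity) hs2.le, div_mul_cancel₀ _ hs2.ne']
  rw [hsplit]
  exact mul_le_mul_of_nonneg_right (min_rpow_le_rpow_of_mem_Icc _ (by positivity) hu)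
    (by positivity)

lemma le_deriv_one_add_mul_sq_rpow (hθ : 0 < θ) (hτ : 0 ≤ τ) {s t : ℝ} (hs : 1 ≤ s)
    (ht : t ∈ Icc (3 / 4 * s) s) :
    3 / 2 * τ * θ * min ((9 / 16 * θ) ^ (τ - 1)) ((1 + θ) ^ (τ - 1)) * s ^ (2 * τ - 1)
      ≤ τ * (1 + θ * t ^ 2) ^ (τ - 1) * (2 * θ * t) := by
  have hpow : s ^ (2 * τ - 1) = s ^ (2 * (τ - 1)) * s := by
    rw [← rpow_add_one (by linarith)]; ring_nf
  calc _ = τ * (min ((9 / 16 * θ) ^ (τ - 1)) ((1 + θ) ^ (τ - 1)) * s ^ (2 * (τ - 1)))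
        * (2 * θ * (3 / 4 * s)) := by rw [hpow]; ring
    _ ≤ τ * (1 + θ * t ^ 2) ^ (τ - 1) * (2 * θ * t) := by
      gcongr
      · exact min_rpow_mul_rpow_le_rpow_one_add_mul_sq hθ hs ht
      · exact ht.1

lemma one_add_mul_sub_sq_rpow_le (hθ : 0 < θ) (hτ : 0 ≤ τ) {s δ : ℝ} (hs : 1 ≤ s) (hδ : 0 < δ)
    (hδs : δ ≤ s / 4) :
    (1 + θ * (s - δ) ^ 2) ^ τ
      ≤ (1 + θ * s ^ 2) ^ τ
        - 3 / 2 * τ * θ * min ((9 / 16 * θ) ^ (τ - 1)) ((1 + θ) ^ (τ - 1)) * δ * s ^ (2 * τ - 1) := by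
  have hderiv := hasDerivAt_one_add_mul_sq_rpow (τ := τ) hθ.le
  obtain ⟨c, hc, hslope⟩ := exists_hasDerivAt_eq_slope _ _ (sub_lt_self s hδ)
    (fun t _ ↦ (hderiv t).continuousAt.continuousWithinAt) (fun t _ ↦ hderiv t)
  have hbound := le_deriv_one_add_mul_sq_rpow hθ hτ hs (t := c) ⟨by linarith [hc.1], hc.2.le⟩
  rw [hslope, sub_sub_cancel, le_div_iff₀ hδ] at hbound
  linarith

end

/-- for `|x| ≥ 1` and `r ∈ (0,1]`,
`(1 + θ(|x| - r/4)²)^τ ≤ (1 + θ|x|²)^τ - c₃ r |x|^{2τ-1}`. -/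
theorem stmt_4 (n : ℕ) (θ τ : ℝ) (hθ : 0 < θ) (hτ : 1 / 2 < τ) :
    ∃ c₃ > (0 : ℝ), ∀ x : EuclideanSpace ℝ (Fin n), 1 ≤ ‖x‖ →
      ∀ r ∈ Set.Ioc (0 : ℝ) 1,
        (1 + θ * (‖x‖ - r / 4) ^ 2) ^ τ
          ≤ (1 + θ * ‖x‖ ^ 2) ^ τ - c₃ * r * ‖x‖ ^ (2 * τ - 1) := by
  refine ⟨3 / 8 * τ * θ * min ((9 / 16 * θ) ^ (τ - 1)) ((1 + θ) ^ (τ - 1)), by positivity,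
    fun x hx r hr ↦ ?_⟩
  obtain ⟨hr₀, hr₁⟩ := hr
  have := one_add_mul_sub_sq_rpow_le hθ (τ := τ) (by linarith) hx (δ := r / 4) (by linarith)
    (by linarith)
  linarith
end

section
/- Let n ≥ 1, θ > 0, τ ∈ (1/2, ∞), and let V(x) = ψ(x) + (1 + θ|x|²)^τ on ℝⁿ, where ψ is twice continuously differentiable with bounded first and second derivatives. Then there exists a constant c > 0 such that |∇V(x)|² ≤ c(1 + |x|^{4τ}) for all x ∈ ℝⁿ, and ⟨∇V(x) − ∇V(y), x − y⟩ ≥ −c|x − y|² for all x, y ∈ ℝⁿ. -/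
/-!
Write `P(x) = 1 + θ‖x‖²`, so that `∇V(x) = ∇ψ(x) + 2θτ P(x)^(τ-1) x`. The `ψ` part is bounded
and, by the bound on the Hessian, `C`-Lipschitz. The radial part has norm squared at most
`4θτ² P(x)^(2τ) ≲ 1 + ‖x‖^(4τ)`, and it is a monotone vector field: a field `a(‖x‖) x` with
`a ≥ 0` and `r ↦ r a(r)` nondecreasing satisfies `⟨a(‖x‖) x - a(‖y‖) y, x - y⟩ ≥ 0` by
Cauchy–Schwarz, and `r ↦ r (1 + θr²)^(τ-1)` has derivative `(1 + θr²)^(τ-2) (1 + (2τ-1)θr²)`,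
which is nonnegative precisely because `τ ≥ 1/2`.
-/

open RealInnerProductSpace

section Real

variable {θ : ℝ}

theorem hasDerivAt_mul_one_add_mul_sq_rpow (hθ : 0 ≤ θ) (τ r : ℝ) :
    HasDerivAt (fun r : ℝ => r * (1 + θ * r ^ 2) ^ (τ - 1))
      ((1 + θ * r ^ 2) ^ (τ - 2) * (1 + (2 * τ - 1) * (θ * r ^ 2))) r := by
  have hP : 0 < 1 + θ * r ^ 2 := by positivity
  have hbase : HasDerivAt (fun r : ℝ => 1 + θ * r ^ 2) (θ * (2 * r)) r := by
    simpa using ((hasDerivAt_pow 2 r).const_mul θ).const_add 1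
  refine ((hasDerivAt_id' r).mul (hbase.rpow_const (p := τ - 1) (Or.inl hP.ne'))).congr_deriv ?_
  rw [show τ - 1 = τ - 2 + 1 by ring, Real.rpow_add_one hP.ne', show τ - 2 + 1 - 1 = τ - 2 by ring]
  ring

theorem monotone_mul_one_add_mul_sq_rpow {τ : ℝ} (hθ : 0 ≤ θ) (hτ : 1 / 2 ≤ τ) :
    Monotone fun r : ℝ => r * (1 + θ * r ^ 2) ^ (τ - 1) := by
  refine monotone_of_deriv_nonneg
    (fun r => (hasDerivAt_mul_one_add_mul_sq_rpow hθ τ r).differentiableAt) fun r => ?_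
  rw [(hasDerivAt_mul_one_add_mul_sq_rpow hθ τ r).deriv]
  have : 0 ≤ (2 * τ - 1) * (θ * r ^ 2) := mul_nonneg (by linarith) (by positivity)
  exact mul_nonneg (Real.rpow_nonneg (by positivity) _) (by linarith)

theorem one_add_mul_sq_rpow_le {s u : ℝ} (hθ : 0 ≤ θ) (hs : 0 ≤ s) (hu : 0 ≤ u) :
    (1 + θ * u ^ 2) ^ s ≤ (1 + θ) ^ s * (1 + u ^ (2 * s)) := by
  have hus : 0 ≤ u ^ (2 * s) := Real.rpow_nonneg hu _
  have hθs : 0 ≤ (1 + θ) ^ s := Real.rpow_nonneg (by linarith) s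
  rcases le_total u 1 with h | h
  · have : (1 + θ * u ^ 2) ^ s ≤ (1 + θ) ^ s :=
      Real.rpow_le_rpow (by positivity) (by nlinarith [pow_le_one₀ hu h (n := 2)]) hs
    nlinarith
  · have : (1 + θ * u ^ 2) ^ s ≤ ((1 + θ) * u ^ 2) ^ s :=
      Real.rpow_le_rpow (by positivity) (by nlinarith [one_le_pow₀ h (n := 2)]) hs
    rw [Real.mul_rpow (by linarith) (by positivity), ← Real.rpow_natCast_mul hu] at this
    push_cast at this
    nlinarith

theorem sq_mul_one_add_mul_sq_rpow_le {τ u : ℝ} (hθ : 0 ≤ θ) (hτ : 0 ≤ τ) (hu : 0 ≤ u) :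
    (2 * θ * τ * (1 + θ * u ^ 2) ^ (τ - 1) * u) ^ 2
      ≤ 4 * θ * τ ^ 2 * (1 + θ) ^ (2 * τ) * (1 + u ^ (4 * τ)) := by
  set P := 1 + θ * u ^ 2
  have hP : 1 ≤ P := le_add_of_nonneg_right (by positivity)
  have hθu : θ * u ^ 2 ≤ P ^ 2 := by nlinarith
  have hPτ : (P * P ^ (τ - 1)) ^ 2 = P ^ (2 * τ) := by
    rw [mul_comm, ← Real.rpow_add_one (by positivity), sub_add_cancel,
      ← Real.rpow_mul_natCast (by positivity)]
    ring_nf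
  calc (2 * θ * τ * P ^ (τ - 1) * u) ^ 2
      = 4 * θ * τ ^ 2 * ((θ * u ^ 2) * (P ^ (τ - 1)) ^ 2) := by ring
    _ ≤ 4 * θ * τ ^ 2 * (P ^ 2 * (P ^ (τ - 1)) ^ 2) := by gcongr
    _ = 4 * θ * τ ^ 2 * P ^ (2 * τ) := by rw [← hPτ]; ring
    _ ≤ 4 * θ * τ ^ 2 * ((1 + θ) ^ (2 * τ) * (1 + u ^ (2 * (2 * τ)))) := by
      gcongr
      exact one_add_mul_sq_rpow_le hθ (by positivity) hu
    _ = 4 * θ * τ ^ 2 * (1 + θ) ^ (2 * τ) * (1 + u ^ (4 * τ)) := by ring_nf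

end Real

section InnerProductSpace

variable {E : Type*} [NormedAddCommGroup E] [InnerProductSpace ℝ E]

theorem inner_smul_norm_sub_smul_norm_nonneg {a : ℝ → ℝ} (ha : ∀ r, 0 ≤ r → 0 ≤ a r)
    (hmono : MonotoneOn (fun r => r * a r) (Set.Ici 0)) (x y : E) :
    0 ≤ ⟪a ‖x‖ • x - a ‖y‖ • y, x - y⟫ := by
  have hax := ha _ (norm_nonneg x)
  have hay := ha _ (norm_nonneg y)
  have hcs : (a ‖x‖ + a ‖y‖) * ⟪x, y⟫ ≤ (a ‖x‖ + a ‖y‖) * (‖x‖ * ‖y‖) :=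
    mul_le_mul_of_nonneg_left (real_inner_le_norm x y) (add_nonneg hax hay)
  have hrad : 0 ≤ (‖x‖ * a ‖x‖ - ‖y‖ * a ‖y‖) * (‖x‖ - ‖y‖) := by
    rcases le_total ‖x‖ ‖y‖ with h | h
    · exact mul_nonneg_of_nonpos_of_nonpos
        (sub_nonpos.2 (hmono (norm_nonneg x) (norm_nonneg y) h)) (sub_nonpos.2 h)
    · exact mul_nonneg (sub_nonneg.2 (hmono (norm_nonneg y) (norm_nonneg x) h)) (sub_nonneg.2 h)
  simp only [inner_sub_left, inner_sub_right, real_inner_smul_left, real_inner_self_eq_norm_sq,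
    real_inner_comm x y]
  nlinarith

variable {θ τ : ℝ}

theorem inner_smul_one_add_mul_norm_sq_rpow_sub_nonneg (hθ : 0 ≤ θ) (hτ : 1 / 2 ≤ τ)
    (x y : E) :
    0 ≤ ⟪(2 * θ * τ * (1 + θ * ‖x‖ ^ 2) ^ (τ - 1)) • x
      - (2 * θ * τ * (1 + θ * ‖y‖ ^ 2) ^ (τ - 1)) • y, x - y⟫ := by
  have hτ0 : 0 ≤ τ := by linarith
  refine inner_smul_norm_sub_smul_norm_nonneg (a := fun r => 2 * θ * τ * (1 + θ * r ^ 2) ^ (τ - 1))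
    (fun r _ => by positivity) ?_ x y
  refine (((monotone_mul_one_add_mul_sq_rpow hθ hτ).const_mul
    (by positivity : 0 ≤ 2 * θ * τ)).monotoneOn _).congr fun r _ => ?_
  ring

theorem norm_smul_one_add_mul_norm_sq_rpow_sq_le (hθ : 0 ≤ θ) (hτ : 0 ≤ τ) (x : E) :
    ‖(2 * θ * τ * (1 + θ * ‖x‖ ^ 2) ^ (τ - 1)) • x‖ ^ 2
      ≤ 4 * θ * τ ^ 2 * (1 + θ) ^ (2 * τ) * (1 + ‖x‖ ^ (4 * τ)) := by
  rw [norm_smul, Real.norm_of_nonneg (by positivity)]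
  exact sq_mul_one_add_mul_sq_rpow_le hθ hτ (norm_nonneg x)

variable [CompleteSpace E]

theorem norm_gradient (f : E → ℝ) (x : E) : ‖gradient f x‖ = ‖fderiv ℝ f x‖ :=
  (InnerProductSpace.toDual ℝ E).symm.norm_map _

theorem gradient_add {f g : E → ℝ} {x : E} (hf : DifferentiableAt ℝ f x)
    (hg : DifferentiableAt ℝ g x) :
    gradient (fun y => f y + g y) x = gradient f x + gradient g x := by
  simp only [gradient, fderiv_fun_add hf hg, map_add]

theorem ContDiff.norm_gradient_sub_le {f : E → ℝ} {C : ℝ} (hf : ContDiff ℝ 2 f)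
    (hC : ∀ x, ‖fderiv ℝ (fderiv ℝ f) x‖ ≤ C) (x y : E) :
    ‖gradient f x - gradient f y‖ ≤ C * ‖x - y‖ := by
  have hf' : Differentiable ℝ (fderiv ℝ f) :=
    (hf.fderiv_right (m := 1) (by norm_num)).differentiable (by norm_num)
  rw [gradient, gradient, ← map_sub, LinearIsometryEquiv.norm_map]
  exact Convex.norm_image_sub_le_of_norm_fderiv_le (fun z _ => hf' z) (fun z _ => hC z)
    convex_univ trivial trivial

theorem ContDiff.neg_mul_sq_le_inner_gradient_sub {f : E → ℝ} {C : ℝ} (hf : ContDiff ℝ 2 f)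
    (hC : ∀ x, ‖fderiv ℝ (fderiv ℝ f) x‖ ≤ C) (x y : E) :
    -(C * ‖x - y‖ ^ 2) ≤ ⟪gradient f x - gradient f y, x - y⟫ := by
  refine neg_le_of_abs_le ((abs_real_inner_le_norm _ _).trans ?_)
  rw [sq, ← mul_assoc]
  exact mul_le_mul_of_nonneg_right (hf.norm_gradient_sub_le hC x y) (norm_nonneg _)

theorem HasDerivAt.hasGradientAt_comp_norm_sq {g : ℝ → ℝ} {g' : ℝ} {x : E}
    (hg : HasDerivAt g g' (‖x‖ ^ 2)) :
    HasGradientAt (fun y => g (‖y‖ ^ 2)) ((2 * g') • x) x := by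
  rw [hasGradientAt_iff_hasFDerivAt]
  refine (hg.comp_hasFDerivAt x (hasStrictFDerivAt_norm_sq x).hasFDerivAt).congr_fderiv ?_
  ext y
  simp
  ring

theorem hasGradientAt_one_add_mul_norm_sq_rpow (hθ : 0 ≤ θ) (τ : ℝ) (x : E) :
    HasGradientAt (fun y => (1 + θ * ‖y‖ ^ 2) ^ τ)
      ((2 * θ * τ * (1 + θ * ‖x‖ ^ 2) ^ (τ - 1)) • x) x := by
  have hP : 1 + θ * ‖x‖ ^ 2 ≠ 0 := by positivity
  have hg : HasDerivAt (fun s : ℝ => (1 + θ * s) ^ τ) (θ * τ * (1 + θ * ‖x‖ ^ 2) ^ (τ - 1))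
      (‖x‖ ^ 2) := by
    simpa using (((hasDerivAt_id _).const_mul θ).const_add 1).rpow_const (p := τ) (Or.inl hP)
  convert hg.hasGradientAt_comp_norm_sq using 2
  ring

end InnerProductSpace

theorem stmt_7_general (n : ℕ) (θ τ : ℝ) (hθ : 0 < θ) (hτ : 1 / 2 < τ)
    (ψ V : EuclideanSpace ℝ (Fin n) → ℝ)
    (hψ : ContDiff ℝ 2 ψ)
    (hψ1 : ∃ B, ∀ x, ‖fderiv ℝ ψ x‖ ≤ B)
    (hψ2 : ∃ B, ∀ x, ‖fderiv ℝ (fderiv ℝ ψ) x‖ ≤ B)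
    (hV : ∀ x, V x = ψ x + (1 + θ * ‖x‖ ^ 2) ^ τ) :
    ∃ c > (0 : ℝ),
      (∀ x, ‖gradient V x‖ ^ 2 ≤ c * (1 + ‖x‖ ^ (4 * τ))) ∧
      (∀ x y, ⟪gradient V x - gradient V y, x - y⟫ ≥ -c * ‖x - y‖ ^ 2) := by
  obtain ⟨B, hB⟩ := hψ1
  obtain ⟨C, hC⟩ := hψ2
  have hC0 : 0 ≤ C := (norm_nonneg (fderiv ℝ (fderiv ℝ ψ) 0)).trans (hC 0)
  have hgradV : ∀ x, gradient V x
      = gradient ψ x + (2 * θ * τ * (1 + θ * ‖x‖ ^ 2) ^ (τ - 1)) • x := fun x => by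
    have hφ := hasGradientAt_one_add_mul_norm_sq_rpow hθ.le τ x
    rw [show V = fun y => ψ y + (1 + θ * ‖y‖ ^ 2) ^ τ from funext hV,
      gradient_add (hψ.differentiable (by norm_num) x) hφ.differentiableAt, hφ.gradient]
  set K := 4 * θ * τ ^ 2 * (1 + θ) ^ (2 * τ)
  have hK : 0 ≤ K := by positivity
  refine ⟨2 * B ^ 2 + 2 * K + C, by positivity, fun x => ?_, fun x y => ?_⟩
  · have hψx : ‖gradient ψ x‖ ^ 2 ≤ B ^ 2 := by
      rw [norm_gradient]
      exact pow_le_pow_left₀ (norm_nonneg _) (hB x) 2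
    have hφx := norm_smul_one_add_mul_norm_sq_rpow_sq_le hθ.le (by linarith : 0 ≤ τ) x
    have hx : 0 ≤ ‖x‖ ^ (4 * τ) := Real.rpow_nonneg (norm_nonneg x) _
    rw [hgradV]
    refine (pow_le_pow_left₀ (norm_nonneg _) (norm_add_le _ _) 2).trans (add_sq_le.trans ?_)
    nlinarith [mul_nonneg (sq_nonneg B) hx, mul_nonneg hC0 hx]
  · have hψxy := hψ.neg_mul_sq_le_inner_gradient_sub hC x y
    have hφxy := inner_smul_one_add_mul_norm_sq_rpow_sub_nonneg hθ.le hτ.le x y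
    rw [hgradV, hgradV, add_sub_add_comm, inner_add_left]
    nlinarith [mul_nonneg (add_nonneg (sq_nonneg B) hK) (sq_nonneg ‖x - y‖)]

/-- growth of the gradient and semi-convexity of
`V(x) = ψ(x) + (1+θ|x|²)^τ` with `ψ ∈ C²_b`. -/
theorem stmt_7 (n : ℕ) (hn : 1 ≤ n) (θ τ : ℝ) (hθ : 0 < θ) (hτ : 1 / 2 < τ)
    (ψ V : EuclideanSpace ℝ (Fin n) → ℝ)
    (hψ : ContDiff ℝ 2 ψ)
    (hψ1 : ∃ B, ∀ x, ‖fderiv ℝ ψ x‖ ≤ B)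
    (hψ2 : ∃ B, ∀ x, ‖fderiv ℝ (fderiv ℝ ψ) x‖ ≤ B)
    (hV : ∀ x, V x = ψ x + (1 + θ * ‖x‖ ^ 2) ^ τ) :
    ∃ c > (0 : ℝ),
      (∀ x, ‖gradient V x‖ ^ 2 ≤ c * (1 + ‖x‖ ^ (4 * τ))) ∧
      (∀ x y, ⟪gradient V x - gradient V y, x - y⟫ ≥ -c * ‖x - y‖ ^ 2) :=
  stmt_7_general n θ τ hθ hτ ψ V hψ hψ1 hψ2 hV
end

section
/- Let l > 2 and define ρ_L(x) = | ∫_{1/2}^x (s(1−s))^{−l/2} ds | for x ∈ (0,1). Then for every ε > 0, ∫₀¹ e^{ε ρ_L(x)} dx = ∞. -/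
open MeasureTheory Set Real

/-! Near `0` the integrand `(s(1-s))^{-l/2}` is at least `s^{-l/2}`, so `ρ_L(x)` grows at least like
the negative power `x^{1-l/2}` up to an additive constant. One term of the exponential series shows
that the exponential of a positive multiple of a negative power of `x` dominates a multiple of
`x⁻¹`, which is not integrable at `0`. -/

lemma lintegral_Ioo_zero_const_mul_inv_eq_top {C c : ℝ} (hC : 0 < C) (hc : 0 < c) :
    ∫⁻ x in Ioo 0 c, ENNReal.ofReal (C * x⁻¹) = ⊤ := by
  by_contra h
  have hint : IntegrableOn (fun x : ℝ => C * x⁻¹) (Ioo 0 c) := by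
    refine (lintegral_ofReal_ne_top_iff_integrable (by fun_prop) ?_).1 h
    filter_upwards [ae_restrict_mem measurableSet_Ioo] with x hx using by
      have := hx.1; positivity
  have hrpow : IntegrableOn (fun x : ℝ => x ^ (-1 : ℝ)) (Ioo 0 c) :=
    IntegrableOn.congr_fun (hint.const_mul C⁻¹) (fun x _ => by simp [rpow_neg_one, hC.ne'])
      measurableSet_Ioo
  exact lt_irrefl _ ((intervalIntegral.integrableOn_Ioo_rpow_iff hc).1 hrpow)

lemma exists_mul_inv_le_exp_mul_rpow_neg {a b : ℝ} (ha : 0 < a) (hb : 0 < b) :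
    ∃ C > 0, ∀ x ∈ Ioc (0 : ℝ) 1, C * x⁻¹ ≤ exp (b * x ^ (-a)) := by
  obtain ⟨n, hn⟩ := exists_nat_ge a⁻¹
  have hna : 1 ≤ n * a := by rwa [← inv_mul_cancel₀ ha.ne', mul_le_mul_iff_left₀ ha]
  refine ⟨b ^ n / n.factorial, by positivity, fun x ⟨hx0, hx1⟩ => ?_⟩
  calc b ^ n / n.factorial * x⁻¹ ≤ b ^ n / n.factorial * x ^ (-(n * a)) := by
        gcongr
        rw [← rpow_neg_one x]
        exact rpow_le_rpow_of_exponent_ge hx0 hx1 (by linarith)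
    _ = (b * x ^ (-a)) ^ n / n.factorial := by
        rw [mul_pow, ← rpow_natCast (x ^ (-a)), ← rpow_mul hx0.le]
        ring_nf
    _ ≤ exp (b * x ^ (-a)) := pow_div_factorial_le_exp _ (by positivity) n

lemma le_integral_rpow_neg_mul_one_sub {p x : ℝ} (hp : 1 < p) (hx0 : 0 < x)
    (hx : x ≤ 1 / 2) :
    (x ^ (1 - p) - (1 / 2) ^ (1 - p)) / (p - 1) ≤ ∫ s in x..1 / 2, (s * (1 - s)) ^ (-p) := by
  have h0 : (0 : ℝ) ∉ uIcc x (1 / 2) := by rw [uIcc_of_le hx]; exact fun h => hx0.not_ge h.1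
  have hpos : ∀ s ∈ uIcc x (1 / 2), 0 < s ∧ 0 < 1 - s := by
    rw [uIcc_of_le hx]; exact fun s hs => ⟨hx0.trans_le hs.1, by linarith [hs.2]⟩
  calc (x ^ (1 - p) - (1 / 2) ^ (1 - p)) / (p - 1) = ∫ s in x..1 / 2, s ^ (-p) := by
        have hp0 : p - 1 ≠ 0 := by linarith
        have hp1 : 1 - p ≠ 0 := by linarith
        rw [integral_rpow (Or.inr ⟨by linarith, h0⟩), show -p + 1 = 1 - p by ring]
        field_simp
        ring
    _ ≤ ∫ s in x..1 / 2, (s * (1 - s)) ^ (-p) := by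
        refine intervalIntegral.integral_mono_on hx
          (intervalIntegral.intervalIntegrable_rpow (Or.inr h0)) ?_ fun s hs => ?_
        · refine ContinuousOn.intervalIntegrable (ContinuousOn.rpow_const (by fun_prop) ?_)
          exact fun s hs => Or.inl (mul_pos (hpos s hs).1 (hpos s hs).2).ne'
        · obtain ⟨hs0, hs1⟩ := hpos s (Icc_subset_uIcc hs)
          exact rpow_le_rpow_of_nonpos (by positivity) (by nlinarith) (by linarith)

lemma le_abs_integral_rpow_neg_mul_one_sub {p x : ℝ} (hp : 1 < p) (hx0 : 0 < x)
    (hx : x ≤ 1 / 2) :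
    (x ^ (1 - p) - (1 / 2) ^ (1 - p)) / (p - 1) ≤ |∫ s in (1 / 2)..x, (s * (1 - s)) ^ (-p)| := by
  rw [intervalIntegral.integral_symm, abs_neg]
  exact (le_integral_rpow_neg_mul_one_sub hp hx0 hx).trans (le_abs_self _)

/-- for the intrinsic distance
`ρ_L(x) = |∫_{1/2}^x (s(1-s))^{-l/2} ds|`, the integral `∫₀¹ e^{ε ρ_L} dx` is infinite
for every `ε > 0`. -/
theorem stmt_10 (l : ℝ) (hl : 2 < l)
    (ρL : ℝ → ℝ)
    (hρ : ∀ x ∈ Set.Ioo (0 : ℝ) 1,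
      ρL x = |∫ s in (1 / 2 : ℝ)..x, (s * (1 - s)) ^ (-(l / 2))|) :
    ∀ ε > (0 : ℝ),
      ∫⁻ x in Set.Ioo (0 : ℝ) 1, ENNReal.ofReal (Real.exp (ε * ρL x)) = ⊤ := by
  intro ε hε
  have ha : 0 < l / 2 - 1 := by linarith
  obtain ⟨C, hC, hCx⟩ := exists_mul_inv_le_exp_mul_rpow_neg ha (div_pos hε ha)
  simp only [neg_sub] at hCx
  set K := exp (-(ε / (l / 2 - 1) * (1 / 2) ^ (1 - l / 2)))
  have hpointwise : ∀ x ∈ Ioo (0 : ℝ) (1 / 2), K * C * x⁻¹ ≤ exp (ε * ρL x) := by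
    rintro x ⟨hx0, hx⟩
    have hρx := le_abs_integral_rpow_neg_mul_one_sub (p := l / 2) (by linarith) hx0 hx.le
    rw [← hρ x ⟨hx0, hx.trans one_half_lt_one⟩] at hρx
    calc K * C * x⁻¹ ≤ K * exp (ε / (l / 2 - 1) * x ^ (1 - l / 2)) := by
          rw [mul_assoc]
          gcongr
          exact hCx x ⟨hx0, by linarith⟩
      _ = exp (ε * ((x ^ (1 - l / 2) - (1 / 2) ^ (1 - l / 2)) / (l / 2 - 1))) := by
          rw [← exp_add]; congr 1; ring
      _ ≤ exp (ε * ρL x) := by gcongr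
  refine eq_top_iff.2 ?_
  calc ⊤ = ∫⁻ x in Ioo 0 (1 / 2 : ℝ), ENNReal.ofReal (K * C * x⁻¹) :=
        (lintegral_Ioo_zero_const_mul_inv_eq_top (by positivity) (by norm_num)).symm
    _ ≤ ∫⁻ x in Ioo 0 (1 / 2), ENNReal.ofReal (exp (ε * ρL x)) :=
        setLIntegral_mono' measurableSet_Ioo fun x hx =>
          ENNReal.ofReal_le_ofReal (hpointwise x hx)
    _ ≤ _ := lintegral_mono_set (Ioo_subset_Ioo_right (by norm_num))
end

section
/- Let l > 2. There exists a constant C > 0 such that for every s ∈ (0, 1/2) and every continuously differentiable function f : [s, 1/2] → ℝ with f(1/2) = 0, one has ∫_s^{1/2} f(x)² dx ≤ C s^{1−l} ∫_s^{1/2} (x(1−x))^l f'(x)² dx. -/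
/-!
Differentiating `x f(x)²` and using `f(1/2) = 0` gives `∫ f² + 2 x f f' = -s f(s)² ≤ 0`; since
`f² + 2 x f f' ≥ f²/2 - 2 x² f'²` (complete the square), this is the classical Hardy inequality
`∫ f² ≤ 4 ∫ x² f'²`. On `[s, 1/2]` the weight `x²` is dominated by `2^l s^(1-l) (x(1-x))^l`,
because `x^(2-l) ≤ s^(2-l) ≤ s^(1-l)` for `l ≥ 2` and `x ≤ 2 x (1 - x)`.
-/

open Set intervalIntegral

lemma integral_sq_le_four_mul_integral_sq_mul_sq_deriv {f f' : ℝ → ℝ} {a b : ℝ} (ha : 0 ≤ a)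
    (hab : a ≤ b) (hf : ∀ x ∈ Icc a b, HasDerivAt f (f' x) x) (hf' : ContinuousOn f' (Icc a b))
    (hfb : f b = 0) :
    ∫ x in a..b, f x ^ 2 ≤ 4 * ∫ x in a..b, x ^ 2 * f' x ^ 2 := by
  have hfc : ContinuousOn f (Icc a b) := fun x hx => (hf x hx).continuousAt.continuousWithinAt
  have hsq : IntervalIntegrable (fun x => f x ^ 2) MeasureTheory.volume a b :=
    (hfc.pow 2).intervalIntegrable_of_Icc hab
  have hsq' : IntervalIntegrable (fun x => x ^ 2 * f' x ^ 2) MeasureTheory.volume a b :=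
    ((continuousOn_id.pow 2).mul (hf'.pow 2)).intervalIntegrable_of_Icc hab
  have hderiv : ∀ x ∈ uIcc a b,
      HasDerivAt (fun y => y * f y ^ 2) (f x ^ 2 + 2 * x * f x * f' x) x := by
    intro x hx
    rw [uIcc_of_le hab] at hx
    exact ((hasDerivAt_id' x).fun_mul ((hf x hx).fun_pow 2)).congr_deriv (by push_cast; ring)
  have hderiv_int : IntervalIntegrable (fun x => f x ^ 2 + 2 * x * f x * f' x)
      MeasureTheory.volume a b :=
    hsq.add ((((continuousOn_const.mul continuousOn_id).mul hfc).mul hf').intervalIntegrable_of_Icc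
      hab)
  have hboundary : ∫ x in a..b, (f x ^ 2 + 2 * x * f x * f' x) = -(a * f a ^ 2) := by
    rw [integral_eq_sub_of_hasDerivAt hderiv hderiv_int, hfb]
    ring
  have hcompare : ∫ x in a..b, (f x ^ 2 / 2 - 2 * (x ^ 2 * f' x ^ 2))
      ≤ ∫ x in a..b, (f x ^ 2 + 2 * x * f x * f' x) :=
    integral_mono_on hab ((hsq.div_const 2).sub (hsq'.const_mul 2)) hderiv_int
      fun x _ => by nlinarith [sq_nonneg (f x + 2 * x * f' x)]
  rw [integral_sub (hsq.div_const 2) (hsq'.const_mul 2), integral_div, integral_const_mul,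
    hboundary] at hcompare
  nlinarith [mul_nonneg ha (sq_nonneg (f a))]

lemma rpow_le_two_rpow_mul_mul_one_sub_rpow {x l : ℝ} (hx : 0 ≤ x) (hx' : x ≤ 1 / 2)
    (hl : 0 ≤ l) : x ^ l ≤ 2 ^ l * (x * (1 - x)) ^ l := by
  rw [← Real.mul_rpow zero_le_two (by nlinarith)]
  exact Real.rpow_le_rpow hx (by nlinarith) hl

lemma sq_le_rpow_mul_rpow {s x l : ℝ} (hs : 0 < s) (hs' : s ≤ 1) (hsx : s ≤ x) (hl : 2 ≤ l) :
    x ^ 2 ≤ s ^ (1 - l) * x ^ l := by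
  have hx : 0 < x := hs.trans_le hsx
  calc x ^ 2 = x ^ (2 - l) * x ^ l := by
        rw [← Real.rpow_add hx, sub_add_cancel, Real.rpow_two]
    _ ≤ s ^ (2 - l) * x ^ l := by
        gcongr ?_ * _
        exact Real.rpow_le_rpow_of_nonpos hs hsx (by linarith)
    _ ≤ s ^ (1 - l) * x ^ l := by
        gcongr ?_ * _
        exact Real.rpow_le_rpow_of_exponent_ge hs hs' (by linarith)

lemma sq_le_two_rpow_mul_rpow_mul_mul_one_sub_rpow {s x l : ℝ} (hs : 0 < s) (hsx : s ≤ x) (hx : x ≤ 1 / 2) (hl : 2 ≤ l) :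
    x ^ 2 ≤ 2 ^ l * s ^ (1 - l) * (x * (1 - x)) ^ l :=
  calc x ^ 2 ≤ s ^ (1 - l) * x ^ l := sq_le_rpow_mul_rpow hs (by linarith) hsx hl
    _ ≤ s ^ (1 - l) * (2 ^ l * (x * (1 - x)) ^ l) := by
        gcongr
        exact rpow_le_two_rpow_mul_mul_one_sub_rpow (by linarith) hx (by linarith)
    _ = 2 ^ l * s ^ (1 - l) * (x * (1 - x)) ^ l := by ring

/-- weighted Hardy inequality
`∫_s^{1/2} f² ≤ C s^{1-l} ∫_s^{1/2} (x(1-x))^l f'²` for `f(1/2) = 0`. -/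
theorem stmt_11 (l : ℝ) (hl : 2 < l) :
    ∃ C > (0 : ℝ), ∀ s ∈ Set.Ioo (0 : ℝ) (1 / 2), ∀ f f' : ℝ → ℝ,
      (∀ x ∈ Set.Icc s (1 / 2), HasDerivAt f (f' x) x) →
      ContinuousOn f' (Set.Icc s (1 / 2)) →
      f (1 / 2) = 0 →
      (∫ x in s..(1 / 2 : ℝ), (f x) ^ 2)
        ≤ C * s ^ (1 - l) * ∫ x in s..(1 / 2 : ℝ), (x * (1 - x)) ^ l * (f' x) ^ 2 := by
  refine ⟨4 * 2 ^ l, by positivity, ?_⟩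
  rintro s ⟨hs, hs'⟩ f f' hf hf' hfb
  have hweight : Continuous fun x : ℝ => (x * (1 - x)) ^ l :=
    (by fun_prop : Continuous fun x : ℝ => x * (1 - x)).rpow_const fun _ => Or.inr (by linarith)
  calc ∫ x in s..(1 / 2 : ℝ), f x ^ 2 ≤ 4 * ∫ x in s..(1 / 2 : ℝ), x ^ 2 * f' x ^ 2 :=
        integral_sq_le_four_mul_integral_sq_mul_sq_deriv hs.le hs'.le hf hf' hfb
    _ ≤ 4 * ∫ x in s..(1 / 2 : ℝ), 2 ^ l * s ^ (1 - l) * ((x * (1 - x)) ^ l * f' x ^ 2) := by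
        gcongr
        refine integral_mono_on hs'.le ?_ ?_ fun x hx => ?_
        · exact ((continuousOn_id.pow 2).mul (hf'.pow 2)).intervalIntegrable_of_Icc hs'.le
        · exact (continuousOn_const.mul (hweight.continuousOn.mul (hf'.pow 2))).intervalIntegrable_of_Icc
            hs'.le
        · rw [← mul_assoc]
          exact mul_le_mul_of_nonneg_right
            (sq_le_two_rpow_mul_rpow_mul_mul_one_sub_rpow hs hx.1 hx.2 hl.le) (sq_nonneg _)
    _ = 4 * 2 ^ l * s ^ (1 - l) * ∫ x in s..(1 / 2 : ℝ), (x * (1 - x)) ^ l * f' x ^ 2 := by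
        rw [integral_const_mul]
        ring
end
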